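/- arXiv:0912.0620 — 2 statements merged into one kernel-verified Lean document; each statement's English description precedes it below -/
import Mathlib

section
/- For every prime p with p ≡ 1 (mod 4), the product of (3+4k) over 0 ≤ k ≤ p−1 with k ≠ (3p−3)/4 is congruent modulo p^2 to the product of (1+4k) over 0 ≤ k ≤ p−1 with k ≠ (p−1)/4. -/
/-!
Write `p = 4m + 1`. Reflecting `k ↦ p - 1 - k` turns `3 + 4k` into `4p - (1 + 4k)` and the excluded
index `3m` into `m`; as an even number `p - 1` of factors remain, the signs cancel and the left side is
`∏ (-4p + aₖ)` with `aₖ = 1 + 4k` over `k ∈ [0, p) \ {m}`. Expanding to first order in `4p`,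
it is `∏ aₖ - 4p ∑ₖ ∏_{j ≠ k} aⱼ` modulo `p²`. Modulo `p` the `aₖ` run through the nonzero residues,
so `∑ₖ ∏_{j ≠ k} aⱼ = (∏ aⱼ) ∑ aₖ⁻¹ ≡ (∏ aⱼ) ∑_{x ≠ 0} x = 0`.
-/

open Finset

theorem Finset.prod_range_erase_reflect {M : Type*} [CommMonoid M] (f : ℕ → M) {n a : ℕ}
    (ha : a < n) :
    ∏ k ∈ (range n).erase (n - 1 - a), f k = ∏ k ∈ (range n).erase a, f (n - 1 - k) := by
  refine prod_nbij' (n - 1 - ·) (n - 1 - ·) ?_ ?_ ?_ ?_ ?_ <;> intro k hk <;>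
    simp only [mem_erase, mem_range] at hk ⊢
  all_goals first
    | omega
    | (congr 1; omega)

theorem Finset.sq_dvd_prod_add_sub_first_order {R ι : Type*} [CommRing R] [DecidableEq ι]
    (c : R) (f : ι → R) (s : Finset ι) :
    c ^ 2 ∣ ∏ k ∈ s, (c + f k) - (∏ k ∈ s, f k + c * ∑ k ∈ s, ∏ j ∈ s.erase k, f j) := by
  induction s using Finset.induction_on with
  | empty => simp
  | @insert a s ha ih =>
    obtain ⟨t, ht⟩ := ih
    have herase : ∀ k ∈ s, (insert a s).erase k = insert a (s.erase k) := fun k hk =>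
      erase_insert_of_ne fun hak => ha (hak ▸ hk)
    rw [prod_insert ha, prod_insert ha, sum_insert ha, erase_insert ha,
      sum_congr rfl fun k hk => by rw [herase k hk, prod_insert fun h => ha (mem_of_mem_erase h)],
      ← mul_sum]
    exact ⟨∑ k ∈ s, ∏ j ∈ s.erase k, f j + (c + f a) * t, by linear_combination (c + f a) * ht⟩

theorem Finset.sum_prod_erase_eq_prod_mul_sum_inv {K ι : Type*} [Field K] [DecidableEq ι]
    {s : Finset ι} {g : ι → K} (hg : ∀ k ∈ s, g k ≠ 0) :
    ∑ k ∈ s, ∏ j ∈ s.erase k, g j = (∏ k ∈ s, g k) * ∑ k ∈ s, (g k)⁻¹ := by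
  rw [mul_sum]
  refine sum_congr rfl fun k hk => ?_
  rw [← mul_prod_erase s g hk, mul_comm (g k), mul_assoc, mul_inv_cancel₀ (hg k hk), mul_one]

theorem FiniteField.sum_inv_eq_zero {K : Type*} [Field K] [Fintype K]
    (hK : 2 < Fintype.card K) : ∑ x : K, x⁻¹ = 0 :=
  (Equiv.sum_comp (Equiv.inv K) id).trans <| by
    simpa using FiniteField.sum_pow_lt_card_sub_one K 1 (by omega)

theorem ZMod.sum_range_natCast {M : Type*} [AddCommMonoid M] (n : ℕ) [NeZero n]
    (f : ZMod n → M) : ∑ k ∈ range n, f k = ∑ x, f x :=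
  sum_nbij' (↑) ZMod.val (by simp) (fun x _ => by simp [ZMod.val_lt])
    (fun _ hk => ZMod.val_cast_of_lt (mem_range.1 hk)) (fun x _ => ZMod.natCast_zmod_val x)
    (fun _ _ => rfl)

theorem dvd_sum_prod_erase_one_add_four_mul {p m : ℕ} (hp : p.Prime) (hpm : p = 4 * m + 1) :
    (p : ℤ) ∣ ∑ k ∈ (range p).erase m, ∏ j ∈ ((range p).erase m).erase k, (1 + 4 * (j : ℤ)) := by
  have := Fact.mk hp
  rw [← ZMod.intCast_zmod_eq_zero_iff_dvd]
  push_cast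
  have hzero : (4 * m + 1 : ZMod p) = 0 := by
    simpa using (show ((4 * m + 1 : ℕ) : ZMod p) = 0 by rw [← hpm, ZMod.natCast_self])
  have h4 : (4 : ZMod p) ≠ 0 := fun h => by simp [h] at hzero
  have hfactor : ∀ k : ℕ, (1 + 4 * k : ZMod p) = 4 * (k - m) := fun k => by
    linear_combination hzero
  have hne : ∀ k ∈ (range p).erase m, (1 + 4 * k : ZMod p) ≠ 0 := by
    intro k hk
    obtain ⟨hkm, hkp⟩ := mem_erase.1 hk
    rw [hfactor]
    refine mul_ne_zero h4 (sub_ne_zero.2 ?_)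
    rwa [Ne, ZMod.natCast_eq_natCast_iff', Nat.mod_eq_of_lt (mem_range.1 hkp),
      Nat.mod_eq_of_lt (by omega)]
  have haffine : ∑ x : ZMod p, (1 + 4 * x)⁻¹ = ∑ x : ZMod p, x⁻¹ :=
    Equiv.sum_comp ((Equiv.mulLeft₀ 4 h4).trans (Equiv.addLeft 1)) (·⁻¹)
  rw [sum_prod_erase_eq_prod_mul_sum_inv hne,
    sum_erase _ (by rw [hfactor, sub_self, mul_zero, inv_zero]),
    ZMod.sum_range_natCast p (fun x => (1 + 4 * x)⁻¹), haffine,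
    FiniteField.sum_inv_eq_zero (by rw [ZMod.card]; have := hp.two_le; omega), mul_zero]

/-- For every prime `p ≡ 1 (mod 4)`,
`∏_{0 ≤ k ≤ p-1, k ≠ (3p-3)/4} (3+4k) ≡ ∏_{0 ≤ k ≤ p-1, k ≠ (p-1)/4} (1+4k) (mod p^2)`. -/
theorem prod_three_four_cong (p : ℕ) (hp : p.Prime) (h4 : p % 4 = 1) :
    (∏ k ∈ (Finset.range p).erase ((3 * p - 3) / 4), (3 + 4 * (k : ℤ)))
      ≡ (∏ k ∈ (Finset.range p).erase ((p - 1) / 4), (1 + 4 * (k : ℤ))) [ZMOD (p : ℤ)^2] := by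
  obtain ⟨m, hpm⟩ : ∃ m, p = 4 * m + 1 := ⟨p / 4, by omega⟩
  have hmp : m < p := by omega
  rw [show (3 * p - 3) / 4 = p - 1 - m by omega, show (p - 1) / 4 = m by omega,
    prod_range_erase_reflect _ hmp]
  set s := (range p).erase m
  have hreflect : ∏ k ∈ s, (3 + 4 * ((p - 1 - k : ℕ) : ℤ))
      = ∏ k ∈ s, (-(4 * p) + (1 + 4 * (k : ℤ))) := calc
    _ = ∏ k ∈ s, -(-(4 * p) + (1 + 4 * (k : ℤ))) := prod_congr rfl fun k hk => by
      have := mem_range.1 (mem_of_mem_erase hk)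
      omega
    _ = _ := by
      rw [prod_neg, card_erase_of_mem (mem_range.2 hmp), card_range, hpm, Nat.add_sub_cancel,
        Even.neg_one_pow ⟨2 * m, by ring⟩, one_mul]
  obtain ⟨t, ht⟩ := sq_dvd_prod_add_sub_first_order (-(4 * (p : ℤ))) (fun k : ℕ => 1 + 4 * (k : ℤ)) s
  obtain ⟨u, hu⟩ := dvd_sum_prod_erase_one_add_four_mul hp hpm
  rw [hreflect, Int.modEq_iff_dvd]
  exact ⟨4 * u - 16 * t, by linear_combination -ht + 4 * (p : ℤ) * hu⟩
end

section
/- For primes p > 3 and positive integers a ≥ b, the binomial coefficient C(pa, pb) is congruent to C(a, b) modulo p^3. -/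
/-!
Write `B m = ∏_{0<i<p} (p m + i)` for the block of integers strictly between consecutive
multiples of `p`. Then `(p n)! = p ^ n n! ∏_{m<n} B m`, so
`C(p(b+c), p b) ∏_{m<b} B m ∏_{m<c} B m = C(b+c, b) ∏_{m<b+c} B m`, and the theorem follows once
every block satisfies `B m ≡ (p-1)! (mod p³)`, a unit.

Modulo `p³`, `p m + i = i (1 + p m / i)` and `∏ (1 + p m / i) = 1 + p m ∑ 1/i + p² m² e₂`, where
`2 e₂ = (∑ 1/i)² - ∑ 1/i²`. For `p > 3`, `∑ 1/i² ≡ ∑_{x ∈ 𝔽_p} x² ≡ 0 (mod p)`; comparing `∑ 1/i`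
with its reflection `∑ 1/(p - i) = -∑ (1/i + p/i² + p²/i³)` then gives Wolstenholme's
`∑ 1/i ≡ 0 (mod p²)`, and the product is `1`.
-/

open Finset Nat

theorem two_mul_prod_one_add_of_pow_three_eq_zero {R ι : Type*} [CommRing R] {π : R}
    (hπ : π ^ 3 = 0) (s : Finset ι) (y : ι → R) :
    2 * ∏ i ∈ s, (1 + π * y i) =
      2 + 2 * π * ∑ i ∈ s, y i + π ^ 2 * ((∑ i ∈ s, y i) ^ 2 - ∑ i ∈ s, y i ^ 2) := by
  classical
  induction s using Finset.induction_on with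
  | empty => simp
  | insert a t ha ih =>
    rw [prod_insert ha, sum_insert ha, sum_insert ha]
    linear_combination (1 + π * y a) * ih + y a * ((∑ i ∈ t, y i) ^ 2 - ∑ i ∈ t, y i ^ 2) * hπ

namespace ZMod

theorem sum_range_natCast_s17 {M : Type*} [AddCommMonoid M] (n : ℕ) [NeZero n]
    (f : ZMod n → M) : ∑ i ∈ range n, f i = ∑ x, f x :=
  sum_nbij' (fun i => (i : ZMod n)) val (fun _ _ => mem_univ _)
    (fun x _ => mem_range.mpr x.val_lt) (fun _ hi => val_cast_of_lt (mem_range.mp hi))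
    (fun x _ => natCast_zmod_val x) (fun _ _ => rfl)

theorem sum_Ico_one_natCast {M : Type*} [AddCommMonoid M] (n : ℕ) [NeZero n]
    (f : ZMod n → M) (hf : f 0 = 0) : ∑ i ∈ Ico 1 n, f i = ∑ x, f x := by
  rw [← sum_range_natCast_s17, range_eq_Ico, sum_eq_sum_Ico_succ_bot (NeZero.pos n),
    Nat.cast_zero, hf, zero_add]

theorem sum_Ico_one_inv_sq {p : ℕ} [Fact p.Prime] (hp : 3 < p) :
    ∑ i ∈ Ico 1 p, ((i : ZMod p)⁻¹) ^ 2 = 0 := by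
  rw [sum_Ico_one_natCast p (fun x => x⁻¹ ^ 2) (by simp),
    Fintype.sum_equiv (Equiv.inv (ZMod p)) (fun x => x⁻¹ ^ 2) (· ^ 2) (fun _ => rfl)]
  exact FiniteField.sum_pow_lt_card_sub_one _ 2 (by rw [card]; omega)

theorem natCast_pow_self_eq_zero (n k : ℕ) : (n : ZMod (n ^ k)) ^ k = 0 :=
  mod_cast natCast_self (n ^ k)

theorem natCast_sq_mul_eq_zero {n : ℕ} [NeZero n] {z : ZMod (n ^ 3)}
    (hz : (z.cast : ZMod n) = 0) : (n : ZMod (n ^ 3)) ^ 2 * z = 0 := by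
  rw [← natCast_val, natCast_eq_zero_iff] at hz
  obtain ⟨t, ht⟩ := hz
  rw [← natCast_zmod_val z, ht]
  push_cast
  linear_combination (t : ZMod (n ^ 3)) * natCast_pow_self_eq_zero n 3

theorem isUnit_natCast_of_lt_prime {p i : ℕ} (hp : p.Prime) (hi0 : i ≠ 0) (hip : i < p)
    (k : ℕ) : IsUnit (i : ZMod (p ^ k)) :=
  (isUnit_iff_coprime i _).mpr ((Nat.coprime_of_lt_prime hi0 hip hp).symm.pow_right k)

section PrimeCube

variable {p : ℕ} [Fact p.Prime]

theorem natCast_mul_inv_of_mem_Ico {i : ℕ} (hi : i ∈ Ico 1 p) :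
    (i : ZMod (p ^ 3)) * (i : ZMod (p ^ 3))⁻¹ = 1 :=
  mul_inv_of_unit _ (isUnit_natCast_of_lt_prime Fact.out
    (one_le_iff_ne_zero.mp (mem_Ico.mp hi).1) (mem_Ico.mp hi).2 3)

theorem isUnit_two_of_three_lt (hp : 3 < p) : IsUnit (2 : ZMod (p ^ 3)) :=
  mod_cast isUnit_natCast_of_lt_prime (Fact.out : p.Prime) two_ne_zero (by omega) 3

theorem cast_inv_natCast_of_mem_Ico {i : ℕ} (hi : i ∈ Ico 1 p) :
    (((i : ZMod (p ^ 3))⁻¹).cast : ZMod p) = (i : ZMod p)⁻¹ := by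
  refine eq_inv_of_mul_eq_one_left ?_
  let f := castHom (dvd_pow_self p three_ne_zero) (ZMod p)
  rw [← castHom_apply (h := dvd_pow_self p three_ne_zero), ← map_natCast f i, ← map_mul,
    mul_comm, natCast_mul_inv_of_mem_Ico hi, map_one]

theorem inv_natCast_prime_sub {i : ℕ} (hi : i ∈ Ico 1 p) :
    ((p - i : ℕ) : ZMod (p ^ 3))⁻¹ = -(i : ZMod (p ^ 3))⁻¹ - p * (i : ZMod (p ^ 3))⁻¹ ^ 2
      - p ^ 2 * (i : ZMod (p ^ 3))⁻¹ ^ 3 := by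
  refine ZMod.inv_eq_of_mul_eq_one _ _ _ ?_
  rw [Nat.cast_sub (mem_Ico.mp hi).2.le]
  linear_combination (1 + p * (i : ZMod (p ^ 3))⁻¹ + p ^ 2 * (i : ZMod (p ^ 3))⁻¹ ^ 2)
    * natCast_mul_inv_of_mem_Ico hi - (i : ZMod (p ^ 3))⁻¹ ^ 3 * natCast_pow_self_eq_zero p 3

theorem sq_mul_sum_inv_sq_eq_zero (hp : 3 < p) :
    (p : ZMod (p ^ 3)) ^ 2 * ∑ i ∈ Ico 1 p, ((i : ZMod (p ^ 3))⁻¹) ^ 2 = 0 := by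
  refine natCast_sq_mul_eq_zero ?_
  rw [← castHom_apply (h := dvd_pow_self p three_ne_zero), map_sum, ← sum_Ico_one_inv_sq hp]
  refine sum_congr rfl fun i hi => ?_
  rw [map_pow, castHom_apply, cast_inv_natCast_of_mem_Ico hi]

theorem mul_sum_inv_eq_zero (hp : 3 < p) :
    (p : ZMod (p ^ 3)) * ∑ i ∈ Ico 1 p, (i : ZMod (p ^ 3))⁻¹ = 0 := by
  have hreflect : ∑ i ∈ Ico 1 p, (i : ZMod (p ^ 3))⁻¹
      = ∑ i ∈ Ico 1 p, ((p - i : ℕ) : ZMod (p ^ 3))⁻¹ := by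
    rw [sum_Ico_reflect (fun j => (j : ZMod (p ^ 3))⁻¹) 1 (Nat.le_succ p), Nat.add_sub_cancel,
      Nat.add_sub_cancel_left]
  rw [sum_congr rfl fun i hi => inv_natCast_prime_sub hi, sum_sub_distrib, sum_sub_distrib, sum_neg_distrib, ← mul_sum,
    ← mul_sum] at hreflect
  refine (isUnit_two_of_three_lt hp).mul_right_eq_zero.mp ?_
  linear_combination (p : ZMod (p ^ 3)) * hreflect - sq_mul_sum_inv_sq_eq_zero hp
    - (∑ i ∈ Ico 1 p, (i : ZMod (p ^ 3))⁻¹ ^ 3) * natCast_pow_self_eq_zero p 3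

end PrimeCube

end ZMod

def blockProd (p m : ℕ) : ℕ := ∏ i ∈ Ico 1 p, (p * m + i)

theorem blockProd_eq_ascFactorial (p m : ℕ) :
    blockProd p m = (p * m + 1).ascFactorial (p - 1) := by
  rw [blockProd, ascFactorial_eq_prod_range, prod_Ico_eq_prod_range]
  exact prod_congr rfl fun _ _ => by ring

theorem factorial_mul_succ {p : ℕ} (hp : 0 < p) (m : ℕ) :
    (p * (m + 1))! = (p * m)! * blockProd p m * (p * (m + 1)) := by
  rw [blockProd_eq_ascFactorial, factorial_mul_ascFactorial,
    show p * (m + 1) = p * m + (p - 1) + 1 by rw [mul_add]; omega, factorial_succ, mul_comm]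

theorem factorial_mul_eq {p : ℕ} (hp : 0 < p) (n : ℕ) :
    (p * n)! = p ^ n * n ! * ∏ m ∈ range n, blockProd p m := by
  induction n with
  | zero => simp
  | succ n ih =>
    rw [factorial_mul_succ hp, ih, prod_range_succ, factorial_succ, pow_succ]
    ring

theorem choose_mul_mul_prod_blockProd {p : ℕ} (hp : 0 < p) (b c : ℕ) :
    (p * (b + c)).choose (p * b) * (∏ m ∈ range b, blockProd p m) * ∏ m ∈ range c, blockProd p m
      = (b + c).choose b * ∏ m ∈ range (b + c), blockProd p m := by
  have hbig := choose_mul_factorial_mul_factorial (Nat.mul_le_mul_left p (le_add_right b c))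
  have hsmall := choose_mul_factorial_mul_factorial (le_add_right b c)
  rw [show p * (b + c) - p * b = p * c by rw [mul_add]; omega, factorial_mul_eq hp,
    factorial_mul_eq hp, factorial_mul_eq hp, ← hsmall, add_tsub_cancel_left, pow_add] at hbig
  refine Nat.eq_of_mul_eq_mul_left (by positivity : 0 < p ^ b * p ^ c * b ! * c !) ?_
  linear_combination hbig

theorem natCast_blockProd {p : ℕ} [Fact p.Prime] (hp : 3 < p) (m : ℕ) :
    (blockProd p m : ZMod (p ^ 3)) = ((p - 1)! : ℕ) := by
  set u : ℕ → ZMod (p ^ 3) := fun i => (i : ZMod (p ^ 3))⁻¹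
  have hfactor : ∀ i ∈ Ico 1 p, ((p * m + i : ℕ) : ZMod (p ^ 3)) = i * (1 + p * (m * u i)) := by
    intro i hi
    push_cast
    linear_combination (-(p * m : ZMod (p ^ 3))) * ZMod.natCast_mul_inv_of_mem_Ico hi
  have hunit : ∏ i ∈ Ico 1 p, (1 + (p : ZMod (p ^ 3)) * (m * u i)) = 1 := by
    refine (ZMod.isUnit_two_of_three_lt hp).mul_left_cancel ?_
    rw [two_mul_prod_one_add_of_pow_three_eq_zero (ZMod.natCast_pow_self_eq_zero p 3)]
    simp only [mul_pow, ← mul_sum]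
    linear_combination (2 * m + p * m ^ 2 * ∑ i ∈ Ico 1 p, u i) * ZMod.mul_sum_inv_eq_zero hp
      - (m : ZMod (p ^ 3)) ^ 2 * ZMod.sq_mul_sum_inv_sq_eq_zero hp
  rw [blockProd, Nat.cast_prod, prod_congr rfl hfactor, prod_mul_distrib, hunit, mul_one,
    ← Nat.cast_prod, ← prod_Ico_id_eq_factorial, Nat.sub_add_cancel (Fact.out : p.Prime).one_le]

theorem natCast_prod_blockProd {p : ℕ} [Fact p.Prime] (hp : 3 < p) (n : ℕ) :
    ((∏ m ∈ range n, blockProd p m : ℕ) : ZMod (p ^ 3)) = ((p - 1)! : ℕ) ^ n := by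
  rw [Nat.cast_prod, prod_congr rfl fun m _ => natCast_blockProd hp m, prod_const, card_range]

theorem choose_mul_prime_cong_general (p a b : ℕ) (hp : p.Prime) (hp3 : 3 < p) (hab : b ≤ a) :
    (p * a).choose (p * b) ≡ a.choose b [MOD p ^ 3] := by
  have := Fact.mk hp
  obtain ⟨c, rfl⟩ := Nat.exists_eq_add_of_le hab
  have hunit : IsUnit (((p - 1)! : ℕ) : ZMod (p ^ 3)) :=
    (ZMod.isUnit_iff_coprime _ _).mpr
      ((hp.coprime_factorial_of_lt (Nat.sub_lt hp.pos one_pos)).symm.pow_right 3)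
  have key := congrArg (Nat.cast : ℕ → ZMod (p ^ 3)) (choose_mul_mul_prod_blockProd hp.pos b c)
  simp only [Nat.cast_mul, natCast_prod_blockProd hp3, mul_assoc, ← pow_add] at key
  rw [← ZMod.natCast_eq_natCast_iff]
  exact (hunit.pow (b + c)).mul_right_cancel key

/-- Jacobsthal–Kazandzidis: for primes `p > 3` and positive integers `a ≥ b`,
`C(pa, pb) ≡ C(a, b) (mod p^3)`. -/
theorem choose_mul_prime_cong (p a b : ℕ) (hp : p.Prime) (hp3 : 3 < p)
    (hb : 0 < b) (hab : b ≤ a) :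
    (p * a).choose (p * b) ≡ a.choose b [MOD p ^ 3] :=
  choose_mul_prime_cong_general p a b hp hp3 hab
end
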